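/- Let m ≥ 2 and n ≥ 0 be integers. For all real x and y: ∫_0^∞ e^{-t} H̃_n^{(m)}(x, yt) dt = e_n^{(m)}(x,y), where e_n^{(m)}(x,y) = ∑_{k=0}^{⌊n/m⌋} x^{n-mk} y^k / ((n-mk)!)². -/

import Mathlib

open MeasureTheory Set

/-- The hybrid polynomials
`H̃_n^(m)(x,y) = ∑_{k=0}^{⌊n/m⌋} x^(n-mk) y^k / (k! ((n-mk)!)²)`. -/
noncomputable def hybridHermite (m n : ℕ) (x y : ℝ) : ℝ :=
  ∑ k ∈ Finset.range (n / m + 1),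
    x ^ (n - m * k) * y ^ k / ((k.factorial : ℝ) * ((n - m * k).factorial : ℝ) ^ 2)

/-- The truncated polynomials
`e_n^(m)(x,y) = ∑_{k=0}^{⌊n/m⌋} x^(n-mk) y^k / ((n-mk)!)²`. -/
noncomputable def truncatedPoly (m n : ℕ) (x y : ℝ) : ℝ :=
  ∑ k ∈ Finset.range (n / m + 1),
    x ^ (n - m * k) * y ^ k / (((n - m * k).factorial : ℝ) ^ 2)

/-! The Borel transform `∫_0^∞ e^{-t} p(t) dt` sends `t^k` to `Γ(k+1) = k!`, so applied to
`H̃_n^(m)(x, yt)` it cancels the factor `1/k!` in each term, leaving `e_n^(m)(x,y)`. -/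

open Real

lemma integrableOn_exp_neg_mul_pow (k : ℕ) :
    IntegrableOn (fun t : ℝ => exp (-t) * t ^ k) (Ioi 0) :=
  (GammaIntegral_convergent (s := (k : ℝ) + 1) (by positivity)).congr_fun
    (fun t _ => by simp only [add_sub_cancel_right, rpow_natCast]) measurableSet_Ioi

lemma integral_exp_neg_mul_pow (k : ℕ) :
    ∫ t : ℝ in Ioi 0, exp (-t) * t ^ k = k.factorial := by
  rw [← Gamma_nat_eq_factorial, Gamma_eq_integral (by positivity)]
  refine setIntegral_congr_fun measurableSet_Ioi (fun t _ => ?_)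
  rw [add_sub_cancel_right, rpow_natCast]

lemma integral_exp_neg_mul_sum_pow {ι : Type*} (s : Finset ι) (c : ι → ℝ) (d : ι → ℕ) :
    ∫ t : ℝ in Ioi 0, exp (-t) * ∑ i ∈ s, c i * t ^ d i
      = ∑ i ∈ s, c i * (d i).factorial := by
  simp_rw [Finset.mul_sum, mul_left_comm (exp _)]
  rw [integral_finsetSum _ fun i _ => (integrableOn_exp_neg_mul_pow (d i)).const_mul (c i)]
  simp_rw [integral_const_mul, integral_exp_neg_mul_pow]

lemma hybridHermite_mul_right (m n : ℕ) (x y t : ℝ) :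
    hybridHermite m n x (y * t) = ∑ k ∈ Finset.range (n / m + 1),
      x ^ (n - m * k) * y ^ k / ((k.factorial : ℝ) * ((n - m * k).factorial : ℝ) ^ 2) * t ^ k := by
  unfold hybridHermite
  refine Finset.sum_congr rfl fun k _ => ?_
  rw [mul_pow]
  ring

theorem borel_transform_hybridHermite_snd_general (m n : ℕ) (x y : ℝ) :
    ∫ t : ℝ in Ioi 0, Real.exp (-t) * hybridHermite m n x (y * t)
      = truncatedPoly m n x y := by
  simp_rw [hybridHermite_mul_right]
  rw [integral_exp_neg_mul_sum_pow, truncatedPoly]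
  refine Finset.sum_congr rfl fun k _ => ?_
  field_simp

/-- For `m ≥ 2`, `n ≥ 0` and all real `x, y`, the Borel transform (in the second
variable) of the hybrid polynomial gives the truncated polynomial:
`∫_0^∞ e^{-t} H̃_n^(m)(x, yt) dt = e_n^(m)(x,y)`. -/
theorem borel_transform_hybridHermite_snd (m n : ℕ) (hm : 2 ≤ m) (x y : ℝ) :
    ∫ t : ℝ in Ioi 0, Real.exp (-t) * hybridHermite m n x (y * t)
      = truncatedPoly m n x y :=
  borel_transform_hybridHermite_snd_general m n x y
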